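/- arXiv:2304.00806 — 6 statements merged into one kernel-verified Lean document; each statement's English description precedes it below -/
import Mathlib

section
/- Let $R>0$, $x_0 \in \mathbb{R}^n$ with $|x_0| < R$, and $\beta > 0$. Set $\alpha^2 = R^2 - |x_0|^2$ and define $\varphi(x) = (|x-x_0|^2 + \alpha^2)^{-\beta R}$. Then for every $x$ on the sphere $|x| = R$, the Robin boundary condition holds: $\nabla \varphi(x) \cdot (x/R) + \beta \varphi(x) = 0$. -/
/-! With `u x = ‖x - x₀‖² + α²`, the gradient of `u ^ p` is `2 p u ^ (p - 1) (x - x₀)`. On the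
sphere `‖x‖ = R` one has `u x = 2 ⟪x - x₀, x⟫`, so the normal derivative is `p u ^ p / R`, which
for `p = -β R` is exactly `-β φ x`. -/

open Real

section

variable {E : Type*} [NormedAddCommGroup E] [InnerProductSpace ℝ E]

theorem hasGradientAt_rpow_norm_sub_sq_add [CompleteSpace E] (x₀ : E) (c p : ℝ) {x : E}
    (hx : ‖x - x₀‖ ^ 2 + c ≠ 0) :
    HasGradientAt (fun y => (‖y - x₀‖ ^ 2 + c) ^ p)
      ((2 * p * (‖x - x₀‖ ^ 2 + c) ^ (p - 1)) • (x - x₀)) x := by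
  have hnorm := (((hasFDerivAt_id x).sub_const x₀).norm_sq.add_const c).rpow_const (p := p)
    (Or.inl hx)
  refine hasGradientAt_iff_hasFDerivAt.mpr (hnorm.congr_fderiv ?_)
  ext v
  simp only [id_eq, ContinuousLinearMap.comp_id, smul_apply, coe_innerSL_apply,
    nsmul_eq_mul, smul_eq_mul, InnerProductSpace.toDual_apply_apply, real_inner_smul_left]
  ring

theorem norm_sub_sq_add_eq_two_inner_of_norm_eq {x x₀ : E} {R : ℝ} (hx : ‖x‖ = R) :
    ‖x - x₀‖ ^ 2 + (R ^ 2 - ‖x₀‖ ^ 2) = 2 * inner ℝ (x - x₀) x := by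
  rw [← hx, norm_sub_sq_real, inner_sub_left, real_inner_self_eq_norm_sq, real_inner_comm]
  ring

end

theorem stmt_0_general {n : ℕ} (R β : ℝ) (hR : 0 < R)
    (x₀ : EuclideanSpace ℝ (Fin n)) (hx₀ : ‖x₀‖ < R)
    (φ : EuclideanSpace ℝ (Fin n) → ℝ)
    (hφ : ∀ x, φ x = (‖x - x₀‖ ^ 2 + (R ^ 2 - ‖x₀‖ ^ 2)) ^ (-(β * R))) :
    ∀ x : EuclideanSpace ℝ (Fin n), ‖x‖ = R →
      (inner ℝ (gradient φ x) (R⁻¹ • x) : ℝ) + β * φ x = 0 := by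
  intro x hx
  obtain rfl : φ = fun y => (‖y - x₀‖ ^ 2 + (R ^ 2 - ‖x₀‖ ^ 2)) ^ (-(β * R)) := funext hφ
  beta_reduce
  set u := ‖x - x₀‖ ^ 2 + (R ^ 2 - ‖x₀‖ ^ 2)
  have hu : 0 < u := by nlinarith [norm_nonneg x₀, sq_nonneg ‖x - x₀‖]
  have hu_eq : u = 2 * inner ℝ (x - x₀) x := norm_sub_sq_add_eq_two_inner_of_norm_eq hx
  rw [(hasGradientAt_rpow_norm_sub_sq_add x₀ _ _ hu.ne').gradient, real_inner_smul_left,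
    real_inner_smul_right]
  have hpow : u ^ (-(β * R) - 1) * u = u ^ (-(β * R)) := by
    rw [← rpow_add_one hu.ne', sub_add_cancel]
  calc 2 * -(β * R) * u ^ (-(β * R) - 1) * (R⁻¹ * inner ℝ (x - x₀) x) + β * u ^ (-(β * R))
      = -β * (R * R⁻¹) * (u ^ (-(β * R) - 1) * u) + β * u ^ (-(β * R)) := by rw [hu_eq]; ring
    _ = 0 := by rw [mul_inv_cancel₀ hR.ne', hpow]; ring

theorem stmt_0 {n : ℕ} (R β : ℝ) (hR : 0 < R) (hβ : 0 < β)
    (x₀ : EuclideanSpace ℝ (Fin n)) (hx₀ : ‖x₀‖ < R)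
    (φ : EuclideanSpace ℝ (Fin n) → ℝ)
    (hφ : ∀ x, φ x = (‖x - x₀‖ ^ 2 + (R ^ 2 - ‖x₀‖ ^ 2)) ^ (-(β * R))) :
    ∀ x : EuclideanSpace ℝ (Fin n), ‖x‖ = R →
      (inner ℝ (gradient φ x) (R⁻¹ • x) : ℝ) + β * φ x = 0 :=
  stmt_0_general R β hR x₀ hx₀ φ hφ
end

section
/- Let $R>0$, $x_0 \in \mathbb{R}^n$ ($n \geq 2$) with $0 < |x_0| < R$, $\beta>0$, $\alpha^2 = R^2 - |x_0|^2$, and $\varphi(x) = (|x-x_0|^2+\alpha^2)^{-\beta R}$. Then for all $x \in \mathbb{R}^n$, $-\Delta \varphi(x) = f(\varphi(x))$, where $f(t) = 2\beta R\, t\,[(n - 2(\beta R + 1))\, t^{1/(\beta R)} + 2(\beta R + 1)\alpha^2\, t^{2/(\beta R)}]$. -/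
/-!
With $G(x) = |x - x_0|^2 + \alpha^2$ we have $\varphi = g(|x - x_0|^2)$ for the profile
$g(s) = (s + \alpha^2)^{-\beta R}$, and the Laplacian of any such function is
$2n\,g'(|x - x_0|^2) + 4|x - x_0|^2 g''(|x - x_0|^2)$. Since $t = \varphi(x)$ satisfies
$t^{1/(\beta R)} = G^{-1}$, substituting $|x - x_0|^2 = G - \alpha^2$ rewrites this as $-f(t)$.
-/

open Real

/-- The Euclidean Laplacian, as the sum of the second partial derivatives. -/
noncomputable def lap {n : ℕ} (f : EuclideanSpace ℝ (Fin n) → ℝ)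
    (x : EuclideanSpace ℝ (Fin n)) : ℝ :=
  ∑ i : Fin n, fderiv ℝ (fun y => fderiv ℝ f y (EuclideanSpace.single i 1)) x
    (EuclideanSpace.single i 1)

section Radial

variable {n : ℕ} {x₀ : EuclideanSpace ℝ (Fin n)}

theorem hasFDerivAt_norm_sub_sq (y : EuclideanSpace ℝ (Fin n)) :
    HasFDerivAt (fun y => ‖y - x₀‖ ^ 2) (2 • innerSL ℝ (y - x₀)) y := by
  simpa using ((hasFDerivAt_id y).sub_const x₀).norm_sq

theorem HasDerivAt.comp_norm_sub_sq {g : ℝ → ℝ} {g' : ℝ} {y : EuclideanSpace ℝ (Fin n)}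
    (hg : HasDerivAt g g' (‖y - x₀‖ ^ 2)) :
    HasFDerivAt (fun y => g (‖y - x₀‖ ^ 2)) (g' • 2 • innerSL ℝ (y - x₀)) y :=
  hg.comp_hasFDerivAt y (hasFDerivAt_norm_sub_sq y)

theorem fderiv_comp_norm_sub_sq_single {g g' : ℝ → ℝ} (y : EuclideanSpace ℝ (Fin n))
    (hg : HasDerivAt g (g' (‖y - x₀‖ ^ 2)) (‖y - x₀‖ ^ 2)) (i : Fin n) :
    fderiv ℝ (fun y => g (‖y - x₀‖ ^ 2)) y (EuclideanSpace.single i 1)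
      = g' (‖y - x₀‖ ^ 2) * (2 * (y i - x₀ i)) := by
  rw [hg.comp_norm_sub_sq.fderiv]
  simp [EuclideanSpace.inner_single_right]

theorem lap_comp_norm_sub_sq {g g' : ℝ → ℝ} {g'' : ℝ} (x : EuclideanSpace ℝ (Fin n))
    (hg : ∀ y : EuclideanSpace ℝ (Fin n), HasDerivAt g (g' (‖y - x₀‖ ^ 2)) (‖y - x₀‖ ^ 2))
    (hg' : HasDerivAt g' g'' (‖x - x₀‖ ^ 2)) :
    lap (fun y => g (‖y - x₀‖ ^ 2)) x
      = 2 * n * g' (‖x - x₀‖ ^ 2) + 4 * ‖x - x₀‖ ^ 2 * g'' := by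
  have hsecond : ∀ i : Fin n,
      fderiv ℝ (fun y => fderiv ℝ (fun y => g (‖y - x₀‖ ^ 2)) y (EuclideanSpace.single i 1)) x
        (EuclideanSpace.single i 1)
        = 2 * g' (‖x - x₀‖ ^ 2) + 4 * g'' * (x i - x₀ i) ^ 2 := by
    intro i
    simp_rw [fderiv_comp_norm_sub_sq_single _ (hg _)]
    have hcoord : HasFDerivAt (fun y : EuclideanSpace ℝ (Fin n) => 2 * (y i - x₀ i))
        ((2 : ℝ) • EuclideanSpace.proj (𝕜 := ℝ) i) x := by
      simpa using ((EuclideanSpace.proj (𝕜 := ℝ) i).hasFDerivAt.sub_const (x₀ i)).const_mul 2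
    have hpartial : HasFDerivAt (fun y => g' (‖y - x₀‖ ^ 2) * (2 * (y i - x₀ i)))
        (g' (‖x - x₀‖ ^ 2) • (2 : ℝ) • EuclideanSpace.proj i
          + (2 * (x i - x₀ i)) • g'' • 2 • innerSL ℝ (x - x₀)) x :=
      hg'.comp_norm_sub_sq.mul hcoord
    rw [hpartial.fderiv]
    simp only [add_apply, smul_apply, sub_apply, PiLp.proj_apply, PiLp.single_eq_same,
      smul_eq_mul, map_sub, coe_innerSL_apply, EuclideanSpace.inner_single_right, conj_trivial,
      nsmul_eq_mul]
    ring
  have hnorm : ∑ i : Fin n, (x i - x₀ i) ^ 2 = ‖x - x₀‖ ^ 2 := by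
    simp [EuclideanSpace.norm_sq_eq]
  simp only [lap, hsecond, Finset.sum_add_distrib, ← Finset.mul_sum, hnorm, Finset.sum_const,
    Finset.card_univ, Fintype.card_fin, nsmul_eq_mul]
  ring

end Radial

theorem hasDerivAt_add_const_rpow {a s : ℝ} (p : ℝ) (h : s + a ≠ 0) :
    HasDerivAt (fun s => (s + a) ^ p) (p * (s + a) ^ (p - 1)) s := by
  simpa using ((hasDerivAt_id s).add_const a).rpow_const (p := p) (Or.inl h)

theorem rpow_neg_rpow_div {G : ℝ} (hG : 0 ≤ G) {k : ℝ} (hk : k ≠ 0) (m : ℝ) :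
    (G ^ (-k)) ^ (m / k) = G ^ (-m) := by
  rw [← rpow_mul hG]
  congr 1
  field_simp

theorem stmt_1_general {n : ℕ} (R β : ℝ) (hβ : 0 < β)
    (x₀ : EuclideanSpace ℝ (Fin n)) (hx₀R : ‖x₀‖ < R)
    (α2 : ℝ) (hα2 : α2 = R ^ 2 - ‖x₀‖ ^ 2)
    (φ : EuclideanSpace ℝ (Fin n) → ℝ)
    (hφ : ∀ x, φ x = (‖x - x₀‖ ^ 2 + α2) ^ (-(β * R)))
    (f : ℝ → ℝ)
    (hf : ∀ t : ℝ, f t = 2 * β * R * t *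
      (((n : ℝ) - 2 * (β * R + 1)) * t ^ (1 / (β * R)) +
        2 * (β * R + 1) * α2 * t ^ (2 / (β * R)))) :
    ∀ x : EuclideanSpace ℝ (Fin n), -lap φ x = f (φ x) := by
  intro x
  have hα : 0 < α2 := by
    rw [hα2, sub_pos]
    exact pow_lt_pow_left₀ hx₀R (norm_nonneg x₀) two_ne_zero
  have hk : β * R ≠ 0 := mul_ne_zero hβ.ne' (hx₀R.trans_le' (norm_nonneg x₀)).ne'
  set k := β * R
  have hbase : ∀ s : ℝ, 0 ≤ s → s + α2 ≠ 0 := fun s hs => by positivity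
  have hg : ∀ y : EuclideanSpace ℝ (Fin n), HasDerivAt (fun s => (s + α2) ^ (-k))
      (-k * (‖y - x₀‖ ^ 2 + α2) ^ (-k - 1)) (‖y - x₀‖ ^ 2) :=
    fun y => hasDerivAt_add_const_rpow _ (hbase _ (by positivity))
  have hg' := (hasDerivAt_add_const_rpow (-k - 1)
    (hbase (‖x - x₀‖ ^ 2) (by positivity))).const_mul (-k)
  rw [show φ = fun y => (‖y - x₀‖ ^ 2 + α2) ^ (-k) from funext hφ,
    lap_comp_norm_sub_sq (g' := fun s => -k * (s + α2) ^ (-k - 1)) x hg hg', hf]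
  set G := ‖x - x₀‖ ^ 2 + α2
  have hG : 0 < G := by positivity
  rw [rpow_neg_rpow_div hG.le hk, rpow_neg_rpow_div hG.le hk, sub_sub, rpow_sub_one hG.ne',
    show (1 : ℝ) + 1 = (2 : ℕ) by norm_num, rpow_sub_natCast hG.ne', rpow_neg_one,
    rpow_neg hG.le 2, rpow_two]
  beta_reduce
  field_simp
  ring

theorem stmt_1 {n : ℕ} (hn : 2 ≤ n) (R β : ℝ) (hR : 0 < R) (hβ : 0 < β)
    (x₀ : EuclideanSpace ℝ (Fin n)) (hx₀ : 0 < ‖x₀‖) (hx₀R : ‖x₀‖ < R)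
    (α2 : ℝ) (hα2 : α2 = R ^ 2 - ‖x₀‖ ^ 2)
    (φ : EuclideanSpace ℝ (Fin n) → ℝ)
    (hφ : ∀ x, φ x = (‖x - x₀‖ ^ 2 + α2) ^ (-(β * R)))
    (f : ℝ → ℝ)
    (hf : ∀ t : ℝ, f t = 2 * β * R * t *
      (((n : ℝ) - 2 * (β * R + 1)) * t ^ (1 / (β * R)) +
        2 * (β * R + 1) * α2 * t ^ (2 / (β * R)))) :
    ∀ x : EuclideanSpace ℝ (Fin n), -lap φ x = f (φ x) :=
  stmt_1_general R β hβ x₀ hx₀R α2 hα2 φ hφ f hf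
end

section
/- Let $R>0$, $x_0 \in \mathbb{R}^n$ ($n \geq 3$) with $0<|x_0|<R$, and $0 < \beta \leq (n-2)/(2R)$. Set $\alpha^2 = R^2-|x_0|^2$ and $\varphi(x) = (|x-x_0|^2+\alpha^2)^{-\beta R}$. Then $-\Delta \varphi(x) \geq 0$ for all $x \in \overline{B_R}$, i.e., $\varphi$ is superharmonic on the closed ball. -/
open Real

/-!
With `u = ‖x - x₀‖² + c` and `r = ‖x - x₀‖`, differentiating `u ^ p` twice along each coordinate
and summing gives `Δ (u ^ p) = 2 p u ^ (p - 2) (n u + 2 (p - 1) r²)`. For `p = -γ` the bracket is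
`(n - 2 - 2γ) r² + n c`, which is nonnegative as soon as `2γ ≤ n - 2` and `c > 0`; here
`γ = βR` and `c = R² - ‖x₀‖² = α²`.
-/

section InnerProductSpace

variable {E : Type*} [NormedAddCommGroup E] [InnerProductSpace ℝ E] {x₀ : E} {c : ℝ}

theorem hasFDerivAt_rpow_norm_sub_sq_add (hc : 0 < c) (p : ℝ) (x : E) :
    HasFDerivAt (fun y => (‖y - x₀‖ ^ 2 + c) ^ p)
      ((p * (‖x - x₀‖ ^ 2 + c) ^ (p - 1)) • (2 • innerSL ℝ (x - x₀))) x := by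
  have hu : ‖x - x₀‖ ^ 2 + c ≠ 0 := by positivity
  have hsq : HasFDerivAt (fun y => ‖y - x₀‖ ^ 2 + c) (2 • innerSL ℝ (x - x₀)) x := by
    simpa using ((hasFDerivAt_id x).sub_const x₀).norm_sq.add_const c
  exact (hasDerivAt_rpow_const (Or.inl hu)).comp_hasFDerivAt x hsq

end InnerProductSpace

section EuclideanSpace

variable {n : ℕ} {x₀ : EuclideanSpace ℝ (Fin n)} {c : ℝ}

theorem fderiv_rpow_norm_sub_sq_add_single (hc : 0 < c) (p : ℝ) (i : Fin n) :
    (fun y => fderiv ℝ (fun z => (‖z - x₀‖ ^ 2 + c) ^ p) y (EuclideanSpace.single i 1))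
      = fun y => p * (‖y - x₀‖ ^ 2 + c) ^ (p - 1) * (2 * (y i - x₀ i)) := by
  funext y
  rw [(hasFDerivAt_rpow_norm_sub_sq_add hc p y).fderiv]
  simp [EuclideanSpace.inner_single_right, mul_comm]

theorem fderiv_partial_rpow_norm_sub_sq_add_single (hc : 0 < c) (p : ℝ) (i : Fin n)
    (x : EuclideanSpace ℝ (Fin n)) :
    fderiv ℝ (fun y => p * (‖y - x₀‖ ^ 2 + c) ^ (p - 1) * (2 * (y i - x₀ i))) x
        (EuclideanSpace.single i 1)
      = 2 * p * (‖x - x₀‖ ^ 2 + c) ^ (p - 1)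
        + 4 * p * (p - 1) * (‖x - x₀‖ ^ 2 + c) ^ (p - 2) * (x i - x₀ i) ^ 2 := by
  have hcoord : HasFDerivAt (fun y : EuclideanSpace ℝ (Fin n) => 2 * (y i - x₀ i))
      ((2 : ℝ) • EuclideanSpace.proj i) x :=
    ((EuclideanSpace.proj (𝕜 := ℝ) (ι := Fin n) i).hasFDerivAt.sub_const (x₀ i)).const_mul 2
  have h := ((hasFDerivAt_rpow_norm_sub_sq_add (x₀ := x₀) hc (p - 1) x).const_mul p).mul hcoord
  rw [HasFDerivAt.fderiv (f := fun y => p * (‖y - x₀‖ ^ 2 + c) ^ (p - 1) * (2 * (y i - x₀ i))) h,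
    show p - 1 - 1 = p - 2 by ring]
  simp only [add_apply, smul_apply, PiLp.proj_apply,
    PiLp.single_eq_same, smul_eq_mul, mul_one, PiLp.sub_apply, coe_innerSL_apply,
    EuclideanSpace.inner_single_right, one_mul, nsmul_eq_mul, Nat.cast_ofNat, conj_trivial]
  ring

theorem lap_rpow_norm_sub_sq_add (hc : 0 < c) (p : ℝ) (x : EuclideanSpace ℝ (Fin n)) :
    lap (fun y => (‖y - x₀‖ ^ 2 + c) ^ p) x
      = 2 * p * (‖x - x₀‖ ^ 2 + c) ^ (p - 2)
        * (n * (‖x - x₀‖ ^ 2 + c) + 2 * (p - 1) * ‖x - x₀‖ ^ 2) := by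
  have hu : ‖x - x₀‖ ^ 2 + c ≠ 0 := by positivity
  have hsum : ∑ i, (x i - x₀ i) ^ 2 = ‖x - x₀‖ ^ 2 := by
    simp [EuclideanSpace.real_norm_sq_eq]
  simp only [lap, fderiv_rpow_norm_sub_sq_add_single hc,
    fderiv_partial_rpow_norm_sub_sq_add_single hc]
  rw [Finset.sum_add_distrib, Finset.sum_const, ← Finset.mul_sum, hsum, Finset.card_univ,
    Fintype.card_fin, nsmul_eq_mul, show p - 1 = p - 2 + 1 by ring, rpow_add_one hu]
  ring

theorem lap_rpow_norm_sub_sq_add_nonpos (hc : 0 < c) {γ : ℝ} (hγ : 0 ≤ γ)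
    (hγn : 2 * γ ≤ n - 2) (x : EuclideanSpace ℝ (Fin n)) :
    lap (fun y => (‖y - x₀‖ ^ 2 + c) ^ (-γ)) x ≤ 0 := by
  rw [lap_rpow_norm_sub_sq_add hc]
  have hbracket : 0 ≤ n * (‖x - x₀‖ ^ 2 + c) + 2 * (-γ - 1) * ‖x - x₀‖ ^ 2 := by
    have hr := sq_nonneg ‖x - x₀‖
    nlinarith [mul_nonneg (sub_nonneg.2 hγn) hr, mul_nonneg (Nat.cast_nonneg n) hc.le]
  exact mul_nonpos_of_nonpos_of_nonneg
    (mul_nonpos_of_nonpos_of_nonneg (by linarith) (by positivity)) hbracket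

end EuclideanSpace

theorem stmt_3_general {n : ℕ} (R β : ℝ) (hR : 0 < R) (hβ : 0 < β)
    (hβn : β ≤ ((n : ℝ) - 2) / (2 * R))
    (x₀ : EuclideanSpace ℝ (Fin n)) (hx₀R : ‖x₀‖ < R)
    (φ : EuclideanSpace ℝ (Fin n) → ℝ)
    (hφ : ∀ x, φ x = (‖x - x₀‖ ^ 2 + (R ^ 2 - ‖x₀‖ ^ 2)) ^ (-(β * R))) :
    ∀ x ∈ Metric.closedBall (0 : EuclideanSpace ℝ (Fin n)) R, 0 ≤ -lap φ x := by
  intro x _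
  have hα : 0 < R ^ 2 - ‖x₀‖ ^ 2 := by nlinarith [norm_nonneg x₀]
  have hβR : 2 * (β * R) ≤ n - 2 := by
    linarith [(le_div_iff₀ (by positivity)).1 hβn]
  rw [funext hφ, neg_nonneg]
  exact lap_rpow_norm_sub_sq_add_nonpos hα (by positivity) hβR x

theorem stmt_3 {n : ℕ} (hn : 3 ≤ n) (R β : ℝ) (hR : 0 < R) (hβ : 0 < β)
    (hβn : β ≤ ((n : ℝ) - 2) / (2 * R))
    (x₀ : EuclideanSpace ℝ (Fin n)) (hx₀ : 0 < ‖x₀‖) (hx₀R : ‖x₀‖ < R)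
    (φ : EuclideanSpace ℝ (Fin n) → ℝ)
    (hφ : ∀ x, φ x = (‖x - x₀‖ ^ 2 + (R ^ 2 - ‖x₀‖ ^ 2)) ^ (-(β * R))) :
    ∀ x ∈ Metric.closedBall (0 : EuclideanSpace ℝ (Fin n)) R, 0 ≤ -lap φ x :=
  stmt_3_general R β hR hβ hβn x₀ hx₀R φ hφ
end

section
/- Let $R>0$, $a \in (0,R)$, $\beta>0$, $n=1$, $\alpha^2 = R^2-a^2$, and let $\varphi(x) = ((x-a)^2+\alpha^2)^{-\beta R}$ on $[-R,R]$. Define $f(t) = 2\beta R\, t[(1 - 2(\beta R+1))t^{1/(\beta R)} + 2(\beta R+1)\alpha^2 t^{2/(\beta R)}]$. Then $\varphi$ is a positive solution of $-\varphi'' = f(\varphi)$ on $(-R,R)$ with Robin conditions $-\varphi'(-R)+\beta\varphi(-R)=0$, $\varphi'(R)+\beta\varphi(R)=0$, and $f \circ \varphi$ changes sign on $[-R,R]$. -/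
/-!
Writing `u x = (x - a)² + α²`, one has `φ = u ^ (-βR)`, and since `u' = 2(x - a)`, `u'' = 2` and
`(x - a)² = u - α²`, both `φ''` and `f ∘ φ` are `u ^ (-βR - 2)` times an affine function of `u`;
the two affine functions agree up to sign. The Robin conditions hold because `u(±R) = 2R(R ∓ a)`.
At `x = a` the affine factor of `f ∘ φ` is `α² > 0`, at `x = -R` it is `-2(R + a)(βR² + (βR + 1)a) < 0`.
-/

open Real Set

section QuadraticPower

variable {a s : ℝ} (hs : 0 < s) (p : ℝ)
include hs

lemma sq_sub_add_pos (x : ℝ) : 0 < (x - a) ^ 2 + s := by positivity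

lemma hasDerivAt_sq_sub_add_rpow (x : ℝ) :
    HasDerivAt (fun x => ((x - a) ^ 2 + s) ^ p)
      (p * ((x - a) ^ 2 + s) ^ (p - 1) * (2 * (x - a))) x := by
  have hu : HasDerivAt (fun x : ℝ => (x - a) ^ 2 + s) (2 * (x - a)) x := by
    simpa using (((hasDerivAt_id x).sub_const a).pow 2).add_const s
  exact (hasDerivAt_rpow_const (Or.inl (sq_sub_add_pos hs x).ne')).comp x hu

lemma deriv_sq_sub_add_rpow :
    deriv (fun x => ((x - a) ^ 2 + s) ^ p) =
      fun x => p * ((x - a) ^ 2 + s) ^ (p - 1) * (2 * (x - a)) :=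
  funext fun x => (hasDerivAt_sq_sub_add_rpow hs p x).deriv

lemma deriv_sq_sub_add_rpow_eq_mul (x : ℝ) :
    deriv (fun x => ((x - a) ^ 2 + s) ^ p) x =
      2 * p * (x - a) / ((x - a) ^ 2 + s) * ((x - a) ^ 2 + s) ^ p := by
  rw [deriv_sq_sub_add_rpow hs]
  beta_reduce
  rw [rpow_sub_one (sq_sub_add_pos hs x).ne']
  ring

lemma deriv_deriv_sq_sub_add_rpow (x : ℝ) :
    deriv (deriv fun x => ((x - a) ^ 2 + s) ^ p) x =
      2 * p * ((2 * p - 1) * ((x - a) ^ 2 + s) - 2 * (p - 1) * s) *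
        ((x - a) ^ 2 + s) ^ (p - 2) := by
  have hu := (sq_sub_add_pos (a := a) hs x).ne'
  have hlin : HasDerivAt (fun x : ℝ => 2 * (x - a)) 2 x := by
    simpa using ((hasDerivAt_id x).sub_const a).const_mul 2
  rw [deriv_sq_sub_add_rpow hs]
  refine (((hasDerivAt_sq_sub_add_rpow hs (p - 1) x).const_mul p).mul hlin).deriv.trans ?_
  rw [show p - 1 - 1 = p - 2 by ring, show p - 1 = p - 2 + 1 by ring, rpow_add_one hu]
  ring

end QuadraticPower

lemma rpow_neg_rpow_div_s12 {u : ℝ} (hu : 0 < u) {c : ℝ} (hc : c ≠ 0) (k : ℝ) :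
    (u ^ (-c)) ^ (k / c) = u ^ (-k) := by
  rw [← rpow_mul hu.le]
  congr 1
  field_simp

lemma nonlinearity_rpow_neg {u : ℝ} (hu : 0 < u) {c : ℝ} (hc : c ≠ 0) (s : ℝ) :
    2 * c * u ^ (-c) * ((1 - 2 * (c + 1)) * (u ^ (-c)) ^ (1 / c) +
        2 * (c + 1) * s * (u ^ (-c)) ^ (2 / c)) =
      2 * c * ((1 - 2 * (c + 1)) * u + 2 * (c + 1) * s) * u ^ (-c - 2) := by
  rw [rpow_neg_rpow_div_s12 hu hc, rpow_neg_rpow_div_s12 hu hc, rpow_neg_one,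
    show -c - 2 = -c - 1 - 1 by ring, rpow_sub_one hu.ne', rpow_sub_one hu.ne',
    rpow_neg hu.le 2, rpow_two]
  field_simp

theorem stmt_12 (R a β : ℝ) (hR : 0 < R) (ha : 0 < a) (haR : a < R) (hβ : 0 < β)
    (α2 : ℝ) (hα2 : α2 = R ^ 2 - a ^ 2)
    (φ : ℝ → ℝ) (hφ : ∀ x : ℝ, φ x = ((x - a) ^ 2 + α2) ^ (-(β * R)))
    (f : ℝ → ℝ)
    (hf : ∀ t : ℝ, f t = 2 * β * R * t *
      ((1 - 2 * (β * R + 1)) * t ^ (1 / (β * R)) +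
        2 * (β * R + 1) * α2 * t ^ (2 / (β * R)))) :
    (∀ x ∈ Icc (-R) R, 0 < φ x) ∧
      (∀ x ∈ Ioo (-R) R, -(deriv (deriv φ) x) = f (φ x)) ∧
      (-(deriv φ (-R)) + β * φ (-R) = 0) ∧
      (deriv φ R + β * φ R = 0) ∧
      (∃ x ∈ Icc (-R) R, 0 < f (φ x)) ∧ (∃ x ∈ Icc (-R) R, f (φ x) < 0) := by
  have hc : β * R ≠ 0 := by positivity
  have hs : 0 < α2 := by rw [hα2]; nlinarith
  have hu := sq_sub_add_pos (a := a) hs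
  obtain rfl : φ = fun x => ((x - a) ^ 2 + α2) ^ (-(β * R)) := funext hφ
  have hfφ (x : ℝ) : f (((x - a) ^ 2 + α2) ^ (-(β * R))) =
      2 * (β * R) * ((1 - 2 * (β * R + 1)) * ((x - a) ^ 2 + α2) + 2 * (β * R + 1) * α2) *
        ((x - a) ^ 2 + α2) ^ (-(β * R) - 2) := by
    rw [hf, ← nonlinearity_rpow_neg (hu x) hc]
    ring
  refine ⟨fun x _ => rpow_pos_of_pos (hu x) _, fun x _ => ?_, ?_, ?_, ⟨a, ?_, ?_⟩, ⟨-R, ?_, ?_⟩⟩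
  · rw [deriv_deriv_sq_sub_add_rpow hs, hfφ]
    ring
  · have hu_left : (-R - a) ^ 2 + α2 = 2 * R * (R + a) := by rw [hα2]; ring
    have : R + a ≠ 0 := by positivity
    rw [deriv_sq_sub_add_rpow_eq_mul hs]
    beta_reduce
    rw [hu_left]
    field_simp
    ring
  · have hu_right : (R - a) ^ 2 + α2 = 2 * R * (R - a) := by rw [hα2]; ring
    have : R - a ≠ 0 := by linarith
    rw [deriv_sq_sub_add_rpow_eq_mul hs]
    beta_reduce
    rw [hu_right]
    field_simp
    ring
  · exact ⟨by linarith, haR.le⟩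
  · rw [hfφ]
    rw [show (a - a) ^ 2 + α2 = α2 by ring]
    have := rpow_pos_of_pos hs (-(β * R) - 2)
    nlinarith [mul_pos (mul_pos hβ hR) hs]
  · exact ⟨le_rfl, by linarith⟩
  · rw [hfφ]
    apply mul_neg_of_neg_of_pos _ (rpow_pos_of_pos (hu _) _)
    apply mul_neg_of_pos_of_neg (by positivity)
    rw [hα2]
    nlinarith [mul_pos hβ hR, mul_pos (mul_pos hβ hR) (mul_pos ha hR)]
end

section
/- Let $n \geq 2$, $R > 0$, and $\beta > 0$. There exists a smooth positive function $\varphi$ on $\overline{B_R}$ and a function $f: \mathbb{R}_{>0} \to \mathbb{R}$, locally Lipschitz on $(0,\infty)$, such that $-\Delta\varphi = f(\varphi)$ in $B_R$, $\partial\varphi/\partial\nu + \beta\varphi = 0$ on $\partial B_R$, and $\varphi$ is not radially symmetric about the center of $B_R$. -/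
open Real Set

noncomputable def qf {n : ℕ} (a : EuclideanSpace ℝ (Fin n)) (c : ℝ)
    (x : EuclideanSpace ℝ (Fin n)) : ℝ :=
  (inner ℝ (x - a) (x - a) : ℝ) + c

noncomputable def phi {n : ℕ} (a : EuclideanSpace ℝ (Fin n)) (c m : ℝ)
    (x : EuclideanSpace ℝ (Fin n)) : ℝ := (qf a c x) ^ (-m)

lemma qf_pos {n : ℕ} (a : EuclideanSpace ℝ (Fin n)) {c : ℝ} (hc : 0 < c)
    (x : EuclideanSpace ℝ (Fin n)) : 0 < qf a c x := by
  have h : (0:ℝ) ≤ inner ℝ (x - a) (x - a) := real_inner_self_nonneg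
  unfold qf; linarith

lemma hasFDerivAt_qf {n : ℕ} (a : EuclideanSpace ℝ (Fin n)) (c : ℝ)
    (x : EuclideanSpace ℝ (Fin n)) :
    HasFDerivAt (qf a c) ((2:ℝ) • (innerSL ℝ (x - a))) x := by
  have h1 : HasFDerivAt (fun y : EuclideanSpace ℝ (Fin n) => y - a)
      (ContinuousLinearMap.id ℝ _) x := (hasFDerivAt_id x).sub_const a
  have h2 := (h1.inner ℝ h1).add_const c
  refine HasFDerivAt.congr_fderiv (f := qf a c) h2 ?_
  ext v
  simp only [ContinuousLinearMap.smul_apply, innerSL_apply_apply,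
    ContinuousLinearMap.coe_comp', Function.comp_apply, fderivInnerCLM_apply,
    ContinuousLinearMap.prod_apply, ContinuousLinearMap.coe_id', id_eq, smul_eq_mul,
    real_inner_comm (x - a) v]
  ring

lemma hasFDerivAt_phi {n : ℕ} (a : EuclideanSpace ℝ (Fin n)) {c : ℝ} (m : ℝ) (hc : 0 < c)
    (x : EuclideanSpace ℝ (Fin n)) :
    HasFDerivAt (phi a c m)
      ((-m * (qf a c x) ^ (-m - 1)) • ((2:ℝ) • innerSL ℝ (x - a))) x := by
  have h := (hasFDerivAt_qf a c x).rpow_const (p := -m) (Or.inl (qf_pos a hc x).ne')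
  exact h

lemma fderiv_phi_apply {n : ℕ} (a : EuclideanSpace ℝ (Fin n)) {c : ℝ} (m : ℝ) (hc : 0 < c)
    (x v : EuclideanSpace ℝ (Fin n)) :
    fderiv ℝ (phi a c m) x v
      = (-m * (qf a c x) ^ (-m - 1)) * (2 * (inner ℝ (x - a) v : ℝ)) := by
  rw [(hasFDerivAt_phi a m hc x).fderiv]
  simp only [ContinuousLinearMap.smul_apply, innerSL_apply_apply, smul_eq_mul]

lemma inner_sub_single {n : ℕ} (a y : EuclideanSpace ℝ (Fin n)) (i : Fin n) :
    (inner ℝ (y - a) (EuclideanSpace.single i (1:ℝ)) : ℝ) = y i - a i := by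
  rw [EuclideanSpace.inner_single_right]
  simp

lemma lap_phi {n : ℕ} (a : EuclideanSpace ℝ (Fin n)) {c : ℝ} (m : ℝ) (hc : 0 < c)
    (x : EuclideanSpace ℝ (Fin n)) :
    lap (phi a c m) x =
      (m * (m + 1) * (qf a c x) ^ (-m - 2)) * (4 * (qf a c x - c))
        + (-m * (qf a c x) ^ (-m - 1)) * (2 * n) := by
  have key : ∀ i : Fin n,
      fderiv ℝ (fun y => fderiv ℝ (phi a c m) y (EuclideanSpace.single i 1)) x
          (EuclideanSpace.single i 1)
        = m * (m + 1) * (qf a c x) ^ (-m - 2) * (4 * (x i - a i) ^ 2)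
          + (-m * (qf a c x) ^ (-m - 1)) * 2 := by
    intro i
    have hfun : (fun y => fderiv ℝ (phi a c m) y (EuclideanSpace.single i 1))
        = fun y => (-m * (qf a c y) ^ (-m - 1)) * (2 * (y i - a i)) := by
      funext y
      rw [fderiv_phi_apply a m hc y, inner_sub_single]
    rw [hfun]
    have hA : HasFDerivAt (fun y => -m * (qf a c y) ^ (-m - 1))
        ((-m * ((-m - 1) * (qf a c x) ^ (-m - 2))) • ((2:ℝ) • innerSL ℝ (x - a))) x := by
      have h := ((hasFDerivAt_qf a c x).rpow_const (p := -m - 1)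
        (Or.inl (qf_pos a hc x).ne')).const_mul (-m)
      rw [smul_smul] at h
      have e : -m - 1 - 1 = -m - 2 := by ring
      rw [e] at h
      exact h
    have hB : HasFDerivAt (fun y : EuclideanSpace ℝ (Fin n) => 2 * (y i - a i))
        ((2:ℝ) • (EuclideanSpace.proj i : EuclideanSpace ℝ (Fin n) →L[ℝ] ℝ)) x := by
      have h := (((EuclideanSpace.proj i :
          EuclideanSpace ℝ (Fin n) →L[ℝ] ℝ).hasFDerivAt (x := x)).sub_const (a i)).const_mul (2:ℝ)
      exact h
    have hAB : HasFDerivAt (fun y : EuclideanSpace ℝ (Fin n) => -m * qf a c y ^ (-m - 1) * (2 * (y i - a i))) _ x := hA.mul hB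
    rw [hAB.fderiv]
    have h1 : (inner ℝ (x - a) (EuclideanSpace.single i (1:ℝ)) : ℝ) = x i - a i :=
      inner_sub_single a x i
    simp only [ContinuousLinearMap.add_apply, ContinuousLinearMap.smul_apply,
      ContinuousLinearMap.coe_smul', Pi.smul_apply, innerSL_apply_apply, smul_eq_mul,
      PiLp.proj_apply, EuclideanSpace.single_apply, if_pos rfl, if_true, h1]
    ring
  unfold lap
  rw [Finset.sum_congr rfl (fun i _ => key i), Finset.sum_add_distrib]
  have h2 : ∑ i : Fin n, (4 * (x i - a i) ^ 2) = 4 * (qf a c x - c) := by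
    rw [← Finset.mul_sum]
    congr 1
    unfold qf
    rw [PiLp.inner_apply]
    simp [sq]
  rw [← Finset.mul_sum, h2, Finset.sum_const]
  simp only [Finset.card_univ, Fintype.card_fin, nsmul_eq_mul]
  ring

theorem stmt_14 {n : ℕ} (hn : 2 ≤ n) (R β : ℝ) (hR : 0 < R) (hβ : 0 < β) :
    ∃ (φ : EuclideanSpace ℝ (Fin n) → ℝ) (f : ℝ → ℝ),
      ContDiff ℝ (⊤ : ℕ∞) φ ∧
      (∀ x ∈ Metric.closedBall (0 : EuclideanSpace ℝ (Fin n)) R, 0 < φ x) ∧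
      LocallyLipschitzOn (Ioi 0) f ∧
      (∀ x ∈ Metric.ball (0 : EuclideanSpace ℝ (Fin n)) R, -lap φ x = f (φ x)) ∧
      (∀ x : EuclideanSpace ℝ (Fin n), ‖x‖ = R →
        (inner ℝ (gradient φ x) (R⁻¹ • x) : ℝ) + β * φ x = 0) ∧
      ∃ x ∈ Metric.closedBall (0 : EuclideanSpace ℝ (Fin n)) R,
        ∃ y ∈ Metric.closedBall (0 : EuclideanSpace ℝ (Fin n)) R,
          ‖x‖ = ‖y‖ ∧ φ x ≠ φ y := by
  have i₀ : Fin n := ⟨0, by omega⟩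
  set a : EuclideanSpace ℝ (Fin n) := EuclideanSpace.single i₀ (R/2) with ha
  set m : ℝ := β * R with hm
  set c : ℝ := R^2 - (R/2)^2 with hc
  have hc0 : 0 < c := by rw [hc]; nlinarith
  have hm0 : 0 < m := mul_pos hβ hR
  have hss : ∀ r s : ℝ, (inner ℝ (EuclideanSpace.single i₀ r)
      (EuclideanSpace.single i₀ s) : ℝ) = r * s := by
    intro r s
    rw [EuclideanSpace.inner_single_left]
    simp [EuclideanSpace.single_apply]
  refine ⟨phi a c m,
    fun t => (2*n*m - 4*m*(m+1)) * t ^ (1 + 1/m) + (4*m*(m+1)*c) * t ^ (1 + 2/m),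
    ?_, ?_, ?_, ?_, ?_, ?_⟩
  · -- smoothness
    have hq : ContDiff ℝ (⊤ : ℕ∞) (qf a c) := by
      unfold qf
      exact ((contDiff_id.sub contDiff_const).inner ℝ
        (contDiff_id.sub contDiff_const)).add contDiff_const
    exact contDiff_iff_contDiffAt.mpr fun x =>
      hq.contDiffAt.rpow_const_of_ne (qf_pos a hc0 x).ne'
  · -- positivity
    intro x _
    exact Real.rpow_pos_of_pos (qf_pos a hc0 x) _
  · -- locally Lipschitz
    intro t ht
    have hts : (0:ℝ) < t := ht
    have h1 : ContDiffAt ℝ 1 (fun s : ℝ =>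
        (2*n*m - 4*m*(m+1)) * s ^ (1 + 1/m) + (4*m*(m+1)*c) * s ^ (1 + 2/m)) t :=
      (contDiffAt_const.mul (Real.contDiffAt_rpow_const_of_ne hts.ne')).add
        (contDiffAt_const.mul (Real.contDiffAt_rpow_const_of_ne hts.ne'))
    obtain ⟨K, s, hs, hK⟩ := h1.exists_lipschitzOnWith
    exact ⟨K, s, nhdsWithin_le_nhds hs, hK⟩
  · -- PDE
    intro x _
    rw [lap_phi a m hc0 x]
    have hu0 : 0 < qf a c x := qf_pos a hc0 x
    have e1 : (qf a c x ^ (-m)) ^ (1 + 1/m) = qf a c x ^ (-m - 1) := by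
      rw [← Real.rpow_mul hu0.le]
      congr 1
      field_simp
      ring
    have e2 : (qf a c x ^ (-m)) ^ (1 + 2/m) = qf a c x ^ (-m - 2) := by
      rw [← Real.rpow_mul hu0.le]
      congr 1
      field_simp
      ring
    have e3 : qf a c x ^ (-m - 1) = qf a c x ^ (-m - 2) * qf a c x := by
      rw [show (-m - 1) = (-m - 2) + 1 by ring, Real.rpow_add_one hu0.ne']
    show _ = _ * (phi a c m x) ^ (1 + 1/m) + _ * (phi a c m x) ^ (1 + 2/m)
    unfold phi
    rw [e1, e2, e3]
    ring
  · -- Robin boundary condition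
    intro x hxR
    have hu0 : 0 < qf a c x := qf_pos a hc0 x
    have hgrad : HasGradientAt (phi a c m)
        ((-m * (qf a c x) ^ (-m - 1) * 2) • (x - a)) x := by
      rw [hasGradientAt_iff_hasFDerivAt]
      refine (hasFDerivAt_phi a m hc0 x).congr_fderiv ?_
      ext v
      simp only [InnerProductSpace.toDual_apply_apply, real_inner_smul_left,
        ContinuousLinearMap.smul_apply, innerSL_apply_apply, smul_eq_mul]
      ring
    rw [hgrad.gradient]
    have hna : ‖a‖ = R/2 := by
      rw [ha, EuclideanSpace.norm_single]
      exact abs_of_pos (half_pos hR)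
    have hqx : qf a c x = 2*R^2 - 2*(inner ℝ a x : ℝ) := by
      unfold qf
      rw [inner_sub_left, inner_sub_right, inner_sub_right,
        real_inner_self_eq_norm_sq, real_inner_self_eq_norm_sq, hxR, hna,
        real_inner_comm x a, hc]
      ring
    rw [real_inner_smul_left, real_inner_smul_right, inner_sub_left,
      real_inner_self_eq_norm_sq, hxR]
    show _ + β * (qf a c x) ^ (-m) = 0
    have e : qf a c x ^ (-m) = qf a c x ^ (-m - 1) * qf a c x := by
      rw [← Real.rpow_add_one hu0.ne']
      congr 1
      ring
    rw [e, hqx, hm]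
    field_simp
    ring
  · -- not radial
    have hq1 : qf a c (EuclideanSpace.single i₀ R) = R^2 := by
      unfold qf
      rw [ha, inner_sub_left, inner_sub_right, inner_sub_right, hss, hss, hss, hss, hc]
      ring
    have hq2 : qf a c (EuclideanSpace.single i₀ (-R)) = 3*R^2 := by
      unfold qf
      rw [ha, inner_sub_left, inner_sub_right, inner_sub_right, hss, hss, hss, hss, hc]
      ring
    have hlt : (R^2 : ℝ) ^ m < (3*R^2) ^ m :=
      Real.rpow_lt_rpow (by positivity) (by nlinarith) hm0
    refine ⟨EuclideanSpace.single i₀ R, ?_, EuclideanSpace.single i₀ (-R), ?_, ?_, ?_⟩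
    · simp [mem_closedBall_zero_iff, abs_of_pos hR]
    · simp [mem_closedBall_zero_iff, abs_of_pos hR]
    · simp
    · show (qf a c _) ^ (-m) ≠ (qf a c _) ^ (-m)
      rw [hq1, hq2, Real.rpow_neg (by positivity), Real.rpow_neg (by positivity)]
      intro hEq
      exact absurd (inv_inj.mp hEq) hlt.ne
end

section
/- Let $n \geq 3$, $R>0$, and $0 < \beta \leq (n-2)/(2R)$. Then there exists a positive, superharmonic, smooth function $\varphi$ on $\overline{B_R}$ satisfying the Robin boundary condition $\partial\varphi/\partial\nu + \beta\varphi = 0$ on $\partial B_R$ which is not radially symmetric about the origin. -/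
open Real Set

set_option maxHeartbeats 1000000 in
theorem stmt_15 {n : ℕ} (hn : 3 ≤ n) (R β : ℝ) (hR : 0 < R) (hβ : 0 < β)
    (hβn : β ≤ ((n : ℝ) - 2) / (2 * R)) :
    ∃ φ : EuclideanSpace ℝ (Fin n) → ℝ,
      ContDiff ℝ (⊤ : ℕ∞) φ ∧
      (∀ x ∈ Metric.closedBall (0 : EuclideanSpace ℝ (Fin n)) R, 0 < φ x) ∧
      (∀ x ∈ Metric.closedBall (0 : EuclideanSpace ℝ (Fin n)) R, 0 ≤ -lap φ x) ∧
      (∀ x : EuclideanSpace ℝ (Fin n), ‖x‖ = R →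
        (inner ℝ (gradient φ x) (R⁻¹ • x) : ℝ) + β * φ x = 0) ∧
      ∃ x ∈ Metric.closedBall (0 : EuclideanSpace ℝ (Fin n)) R,
        ∃ y ∈ Metric.closedBall (0 : EuclideanSpace ℝ (Fin n)) R,
          ‖x‖ = ‖y‖ ∧ φ x ≠ φ y := by
  classical
  set E := EuclideanSpace ℝ (Fin n) with hE
  set α : ℝ := β * R with hα
  have hα0 : 0 < α := mul_pos hβ hR
  have hα2 : 2 * α + 2 ≤ n := by
    have : α ≤ ((n:ℝ) - 2) / 2 := by
      rw [hα]
      calc β * R ≤ (((n:ℝ) - 2) / (2 * R)) * R := by nlinarith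
        _ = ((n:ℝ) - 2) / 2 := by field_simp
    linarith
  set c : ℝ := 3 / 4 * R ^ 2 with hc
  have hc0 : 0 < c := by rw [hc]; positivity
  have i₀ : Fin n := ⟨0, by omega⟩
  set v : E := EuclideanSpace.single i₀ (R / 2) with hv
  have hnv : ‖v‖ = R / 2 := by
    rw [hv, EuclideanSpace.norm_single, Real.norm_eq_abs, abs_of_pos (by linarith)]
  set q : E → ℝ := fun y => ‖y - v‖ ^ 2 + c with hqdef
  have hq : ∀ y, 0 < q y := fun y => add_pos_of_nonneg_of_pos (by positivity) hc0
  set φ : E → ℝ := fun y => q y ^ (-α) with hφdef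
  set s : E → ℝ := fun y => -(2 * α) * q y ^ (-α - 1) with hsdef
  -- derivative of q
  have hq' : ∀ y : E, HasFDerivAt q
      ((2 : ℕ) • ((innerSL ℝ (y - v)).comp (ContinuousLinearMap.id ℝ E))) y := by
    intro y
    have h1 : HasFDerivAt (fun z : E => z - v) (ContinuousLinearMap.id ℝ E) y :=
      (hasFDerivAt_id y).sub_const v
    exact h1.norm_sq.add_const c
  have hφ' : ∀ y : E, HasFDerivAt φ ((s y) • innerSL ℝ (y - v)) y := by
    intro y
    have := (hq' y).rpow_const (p := -α) (Or.inl (hq y).ne')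
    refine this.congr_fderiv ?_
    ext w
    simp [hsdef, real_inner_smul_left]
    ring
  have hgrad : ∀ y : E, gradient φ y = s y • (y - v) := by
    intro y
    have : HasGradientAt φ (s y • (y - v)) y := by
      rw [hasGradientAt_iff_hasFDerivAt]
      refine (hφ' y).congr_fderiv ?_
      ext w
      simp [real_inner_smul_left]
    exact this.gradient
  have hq1 : ∀ y : E, q y ^ (-α - 1) * q y = q y ^ (-α) := by
    intro y
    have h := Real.rpow_add (hq y) (-α - 1) 1
    rw [Real.rpow_one] at h
    rw [← h]
    congr 1
    ring
  have hq2 : ∀ y : E, q y ^ (-α - 1 - 1) * q y = q y ^ (-α - 1) := by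
    intro y
    have h := Real.rpow_add (hq y) (-α - 1 - 1) 1
    rw [Real.rpow_one] at h
    rw [← h]
    congr 1
    ring
  refine ⟨φ, ?_, ?_, ?_, ?_, ?_⟩
  · -- smoothness
    have hqc : ContDiff ℝ (⊤ : ℕ∞) q := by
      have h1 : ContDiff ℝ (⊤ : ℕ∞) (fun y : E => y - v) := contDiff_id.sub contDiff_const
      exact (h1.norm_sq (𝕜 := ℝ)).add contDiff_const
    rw [contDiff_iff_contDiffAt]
    intro y
    exact (Real.contDiffAt_rpow_const_of_ne (hq y).ne').comp y hqc.contDiffAt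
  · intro x _
    exact Real.rpow_pos_of_pos (hq x) _
  · -- superharmonicity
    intro x _
    set e : Fin n → E := fun i => EuclideanSpace.single i (1 : ℝ) with he
    have hinner_e : ∀ (i : Fin n) (w : E), (inner ℝ (e i) w : ℝ) = w i := by
      intro i w
      rw [he]
      rw [EuclideanSpace.inner_single_left]
      simp
    set S : E →L[ℝ] ℝ := ((-(2*α) * ((-α - 1) * q x ^ (-α - 1 - 1))) •
        ((2 : ℕ) • ((innerSL ℝ (x - v)).comp (ContinuousLinearMap.id ℝ E)))) with hS
    have hs' : HasFDerivAt s S x := by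
      have := ((hq' x).rpow_const (p := -α - 1) (Or.inl (hq x).ne')).const_mul (-(2*α))
      refine this.congr_fderiv ?_
      ext w
      simp [hS]
      ring
    set G : Fin n → E → ℝ :=
      fun i y => s y * ((innerSL ℝ (e i)) y - (inner ℝ (e i) v : ℝ)) with hGdef
    have hGeq : ∀ i, (fun y => fderiv ℝ φ y (e i)) = G i := by
      intro i
      funext y
      rw [(hφ' y).fderiv]
      simp [hGdef, real_inner_comm, inner_sub_right]
    have hGi : ∀ i, HasFDerivAt (G i)
        (s x • (innerSL ℝ (e i)) + ((innerSL ℝ (e i)) x - (inner ℝ (e i) v : ℝ)) • S) x := by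
      intro i
      have h2 : HasFDerivAt (fun y : E => (innerSL ℝ (e i)) y - (inner ℝ (e i) v : ℝ))
          (innerSL ℝ (e i)) x := ((innerSL ℝ (e i)).hasFDerivAt).sub_const _
      exact hs'.mul h2
    have hlap : lap φ x = (n : ℝ) * s x + 4 * α * (α + 1) * q x ^ (-α - 1 - 1) * ‖x - v‖ ^ 2 := by
      rw [lap]
      have key : ∀ i : Fin n, fderiv ℝ (fun y => fderiv ℝ φ y (EuclideanSpace.single i 1)) x
          (EuclideanSpace.single i 1)
          = s x + 4 * α * (α + 1) * q x ^ (-α - 1 - 1) * ((x - v) i) ^ 2 := by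
        intro i
        have h0 : (fun y => fderiv ℝ φ y (EuclideanSpace.single i 1)) = G i := hGeq i
        rw [h0, (hGi i).fderiv]
        simp only [ContinuousLinearMap.add_apply, ContinuousLinearMap.smul_apply,
          ContinuousLinearMap.coe_smul', Pi.smul_apply, ContinuousLinearMap.coe_comp',
          Function.comp_apply, ContinuousLinearMap.coe_id', id_eq, innerSL_apply_apply, hS,
          smul_eq_mul]
        have h4 : (inner ℝ (e i) (EuclideanSpace.single i (1:ℝ)) : ℝ) = 1 := by
          rw [hinner_e]
          simp [EuclideanSpace.single_apply]
        have h5 : (inner ℝ (x - v) (EuclideanSpace.single i (1:ℝ)) : ℝ) = (x - v) i := by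
          rw [real_inner_comm]
          exact hinner_e i (x - v)
        have h6 : (inner ℝ (e i) x - inner ℝ (e i) v : ℝ) = (x - v) i := by
          rw [← inner_sub_right]
          exact hinner_e i (x - v)
        rw [h4, h5, h6]
        push_cast
        ring
      rw [Finset.sum_congr rfl (fun i _ => key i), Finset.sum_add_distrib, Finset.sum_const,
        ← Finset.mul_sum]
      have hsumsq : ∑ i : Fin n, ((x - v) i) ^ 2 = ‖x - v‖ ^ 2 := by
        rw [← real_inner_self_eq_norm_sq, PiLp.inner_apply]
        simp [RCLike.inner_apply, sq]
      rw [hsumsq]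
      simp [nsmul_eq_mul]
    have hB : 0 ≤ q x ^ (-α - 1 - 1) := Real.rpow_nonneg (hq x).le _
    have hkey : 0 ≤ (n : ℝ) * q x - (2 * α + 2) * ‖x - v‖ ^ 2 := by
      have h1 : (n : ℝ) * q x - (2 * α + 2) * ‖x - v‖ ^ 2
          = ((n : ℝ) - (2 * α + 2)) * ‖x - v‖ ^ 2 + (n : ℝ) * c := by
        rw [show q x = ‖x - v‖ ^ 2 + c from rfl]; ring
      rw [h1]
      have h2 : (0:ℝ) ≤ (n : ℝ) - (2 * α + 2) := by linarith
      have h3 : (0:ℝ) ≤ (n : ℝ) := Nat.cast_nonneg n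
      have h4 : (0:ℝ) ≤ ‖x - v‖ ^ 2 := by positivity
      nlinarith
    have hfinal : -lap φ x
        = 2 * α * q x ^ (-α - 1 - 1) * ((n : ℝ) * q x - (2 * α + 2) * ‖x - v‖ ^ 2) := by
      rw [hlap]
      have e1 : s x = -(2 * α) * (q x ^ (-α - 1 - 1) * q x) := by
        rw [hsdef]
        simp only []
        rw [hq2 x]
      rw [e1]
      ring
    rw [hfinal]
    have : 0 ≤ 2 * α := by linarith
    exact mul_nonneg (mul_nonneg this hB) hkey
  · -- Robin boundary condition
    intro x hx
    rw [hgrad x]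
    rw [real_inner_smul_left, real_inner_smul_right]
    have hxv : (inner ℝ (x - v) x : ℝ) = q x / 2 := by
      have h1 : (inner ℝ (x - v) x : ℝ) = ‖x‖ ^ 2 - inner ℝ v x := by
        rw [inner_sub_left, real_inner_self_eq_norm_sq]
      have h2 : q x = ‖x‖ ^ 2 - 2 * inner ℝ x v + ‖v‖ ^ 2 + c := by
        rw [show q x = ‖x - v‖ ^ 2 + c from rfl, norm_sub_sq_real]
      rw [h1, h2, hx, hnv, hc, real_inner_comm v x]
      ring
    rw [hxv]
    have e1 : s x = -(2 * α) * q x ^ (-α - 1) := rfl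
    have e2 : φ x = q x ^ (-α) := rfl
    rw [e1, e2]
    have e3 : q x ^ (-α - 1) * q x = q x ^ (-α) := hq1 x
    have hαβ : α = β * R := rfl
    field_simp
    nlinarith [hq1 x, Real.rpow_pos_of_pos (hq x) (-α)]
  · -- not radial
    have hvball : v ∈ Metric.closedBall (0 : EuclideanSpace ℝ (Fin n)) R := by
      rw [Metric.mem_closedBall, dist_zero_right]
      rw [show ‖v‖ = R / 2 from hnv]; linarith
    have hvball' : -v ∈ Metric.closedBall (0 : EuclideanSpace ℝ (Fin n)) R := by
      rw [Metric.mem_closedBall, dist_zero_right, norm_neg]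
      rw [show ‖v‖ = R / 2 from hnv]; linarith
    refine ⟨v, hvball, -v, hvball', (norm_neg v).symm, ?_⟩
    have h1 : q v = c := by
      rw [show q v = ‖v - v‖ ^ 2 + c from rfl]
      simp
    have h2 : q (-v) = R ^ 2 + c := by
      rw [show q (-v) = ‖-v - v‖ ^ 2 + c from rfl]
      have : (-v - v : E) = (-2 : ℝ) • v := by module
      rw [this, norm_smul, hnv]
      simp
      ring
    have hlt : φ (-v) < φ v := by
      rw [show φ v = q v ^ (-α) from rfl, show φ (-v) = q (-v) ^ (-α) from rfl, h1, h2]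
      rw [Real.rpow_neg hc0.le, Real.rpow_neg (by positivity)]
      have h3 : c ^ α < (R ^ 2 + c) ^ α := Real.rpow_lt_rpow hc0.le (by nlinarith) hα0
      exact inv_strictAnti₀ (Real.rpow_pos_of_pos hc0 α) h3
    exact hlt.ne'
end
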